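/- Let (J_n) be the jump chain with source-sink structure: upon hitting P it restarts at ρ, and E^ξ[σ_P] < ∞ for every initial distribution ξ. Suppose the aperiodicity condition gcd{n ≥ 1 : P^ρ(σ_P = n−1) > 0} = 1 holds. Then for every probability measure ξ on M, the distribution of J_n started from ξ converges to μ in total variation: ‖ξK^n − μ‖_TV → 0 as n → ∞. In particular the invariant probability measure μ is unique. -/

import Mathlib

/-!
Cut every path of the chain at its first visit to `P`. With `κ^ξ_n = P^ξ(J_n ∈ ·, σ_P ≥ n)`,
`ξK^n = κ^ξ_n + ∑_{k<n} κ^ξ_k(P) ρK^(n-1-k)`, and dually `ρK^m = ∑_{j≤m} u_j κ^ρ_(m-j)`,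
where `u_j` is the probability of a restart at time `j`. The sequence `u` solves the renewal
equation `u_(n+1) = ∑_{k≤n} f_k u_(n-k)` with `f_k = P^ρ(σ_P = k)`, so by the
Erdős–Feller–Pollard theorem `u_n → 1 / E^ρ[σ_P + 1]`. That theorem is proved by extracting,
along times realising `limsup u` (resp. `liminf u`), a limit profile `x_i = lim u_(n_j - i)`:
it satisfies the renewal equation and is extremal at `i = 0`, so it is constant on the additive
monoid generated by the support of `f`, which by aperiodicity contains all large integers; the
renewal identity `∑_{i≤n} P^ρ(σ_P ≥ i) u_(n-i) = 1` then forces the constant to be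
`1 / E^ρ[σ_P + 1]`. Both decompositions are convolutions of a convergent sequence with a
summable one, hence converge uniformly in the set, which is convergence in total variation.
-/

open MeasureTheory ProbabilityTheory Filter Set

/-- Killed iterates: `killedSeq K P ξ n C = P^ξ(J_n ∈ C, σ_P ≥ n)`; in particular
`killedSeq K P ρ (n-1) P = P^ρ(σ_P = n-1)` when `ρ(P) = 0`. -/
noncomputable def killedSeq {M : Type*} [MeasurableSpace M]
    (K : ProbabilityTheory.Kernel M M) (P : Set M) (ξ : Measure M) : ℕ → Measure M
  | 0 => ξ
  | n + 1 => ((killedSeq K P ξ n).restrict Pᶜ).bind K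

/-- `n`-step distributions: `iterateK K ξ n = ξ K^n`, the law of `J_n` when `J_0 ~ ξ`. -/
noncomputable def iterateK {M : Type*} [MeasurableSpace M]
    (K : ProbabilityTheory.Kernel M M) (ξ : Measure M) : ℕ → Measure M
  | 0 => ξ
  | n + 1 => (iterateK K ξ n).bind K

/-- Total variation distance `sup_C |μ(C) − ν(C)|` over measurable sets `C`. -/
noncomputable def tvDist {M : Type*} [MeasurableSpace M] (μ ν : Measure M) : ℝ :=
  ⨆ C : {C : Set M // MeasurableSet C}, |(μ C).toReal - (ν C).toReal|

open Finset Topology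

theorem tendsto_sum_range_of_dominated {F : ℕ → ℕ → ℝ} {g w : ℕ → ℝ} {N : ℕ → ℕ}
    (hw : Summable w) (hN : Tendsto N atTop atTop)
    (hF : ∀ k, Tendsto (fun j => F j k) atTop (𝓝 (g k))) (hFw : ∀ j k, |F j k| ≤ w k) :
    Tendsto (fun j => ∑ k ∈ range (N j), F j k) atTop (𝓝 (∑' k, g k)) := by
  have htrunc : ∀ j, ∑ k ∈ range (N j), F j k = ∑' k, if k < N j then F j k else 0 := by
    intro j
    rw [tsum_eq_sum (s := range (N j)) fun k hk => if_neg (by simpa using hk)]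
    exact sum_congr rfl fun k hk => (if_pos (mem_range.mp hk)).symm
  simp_rw [htrunc]
  refine tendsto_tsum_of_dominated_convergence hw (fun k => ?_) (.of_forall fun j k => ?_)
  · exact (hF k).congr' ((hN.eventually_gt_atTop k).mono fun j hj => (if_pos hj).symm)
  · split_ifs
    · exact hFw j k
    · simpa using (abs_nonneg _).trans (hFw j k)

theorem hasSum_of_tendsto_sum_range_of_dominated {F : ℕ → ℕ → ℝ} {g w : ℕ → ℝ} {N : ℕ → ℕ}
    {ℓ : ℝ} (hw : Summable w) (hN : Tendsto N atTop atTop)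
    (hF : ∀ k, Tendsto (fun j => F j k) atTop (𝓝 (g k))) (hFw : ∀ j k, |F j k| ≤ w k)
    (hlim : Tendsto (fun j => ∑ k ∈ range (N j), F j k) atTop (𝓝 ℓ)) : HasSum g ℓ := by
  have hg : Summable g := .of_norm_bounded hw fun k => le_of_tendsto' (hF k).abs (hFw · k)
  rw [tendsto_nhds_unique hlim (tendsto_sum_range_of_dominated hw hN hF hFw)]
  exact hg.hasSum

noncomputable def convRemainder (ε B : ℕ → ℝ) (r : ℝ) (m : ℕ) : ℝ :=
  ∑ i ∈ range (m + 1), ε (m - i) * B i + r * ∑' i, B (i + (m + 1))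

theorem abs_sum_range_mul_sub_le_convRemainder {y w ε B : ℕ → ℝ} {ℓ r : ℝ}
    (hw0 : ∀ i, 0 ≤ w i) (hwB : ∀ i, w i ≤ B i) (hB : Summable B)
    (hy : ∀ m, |y m - ℓ| ≤ ε m) (hℓ : |ℓ| ≤ r) (m : ℕ) :
    |∑ i ∈ range (m + 1), y (m - i) * w i - ℓ * ∑' i, w i| ≤ convRemainder ε B r m := by
  have hw : Summable w := hB.of_nonneg_of_le hw0 hwB
  have hsplit : ∑ i ∈ range (m + 1), y (m - i) * w i - ℓ * ∑' i, w i
      = ∑ i ∈ range (m + 1), (y (m - i) - ℓ) * w i - ℓ * ∑' i, w (i + (m + 1)) := by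
    rw [← hw.sum_add_tsum_nat_add (m + 1), mul_add, mul_sum]
    simp only [sub_mul, sum_sub_distrib]
    ring
  have htail : ∑' i, w (i + (m + 1)) ≤ ∑' i, B (i + (m + 1)) :=
    ((summable_nat_add_iff _).mpr hw).tsum_le_tsum (fun i => hwB _)
      ((summable_nat_add_iff _).mpr hB)
  rw [hsplit, convRemainder]
  refine (abs_sub _ _).trans (add_le_add ?_ ?_)
  · refine (abs_sum_le_sum_abs _ _).trans (sum_le_sum fun i _ => ?_)
    rw [abs_mul, abs_of_nonneg (hw0 i)]
    exact mul_le_mul (hy _) (hwB i) (hw0 i) ((abs_nonneg _).trans (hy _))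
  · rw [abs_mul, abs_of_nonneg (tsum_nonneg fun i => hw0 _)]
    exact mul_le_mul hℓ htail (tsum_nonneg fun i => hw0 _) ((abs_nonneg _).trans hℓ)

theorem tendsto_convRemainder {ε B : ℕ → ℝ} (r : ℝ) (hε : Tendsto ε atTop (𝓝 0))
    (hB0 : ∀ i, 0 ≤ B i) (hB : Summable B) : Tendsto (convRemainder ε B r) atTop (𝓝 0) := by
  obtain ⟨D, hD⟩ := (Metric.isBounded_range_of_tendsto ε hε).exists_norm_le
  have hhead : Tendsto (fun m => ∑ i ∈ range (m + 1), ε (m - i) * B i) atTop (𝓝 0) := by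
    simpa using tendsto_sum_range_of_dominated (g := fun _ => 0) (hB.mul_left D)
      (tendsto_add_atTop_nat 1)
      (fun i => by simpa using (hε.comp (tendsto_sub_atTop_nat i)).mul_const (B i))
      (fun m i => by
        rw [abs_mul, abs_of_nonneg (hB0 i)]
        exact mul_le_mul_of_nonneg_right (hD _ ⟨_, rfl⟩) (hB0 i))
  have htail : Tendsto (fun m => r * ∑' i, B (i + (m + 1))) atTop (𝓝 0) := by
    simpa using ((tendsto_sum_nat_add B).comp (tendsto_add_atTop_nat 1)).const_mul r
  rw [← add_zero (0 : ℝ)]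
  exact hhead.add htail

section Renewal

variable {a b V x : ℕ → ℝ}

theorem renewal_identity (hb : ∀ n, b n = 1 - ∑ k ∈ range n, a k) (hV0 : V 0 = 1)
    (hV : ∀ n, V (n + 1) = ∑ k ∈ range (n + 1), a k * V (n - k)) (n : ℕ) :
    ∑ i ∈ range (n + 1), b i * V (n - i) = 1 := by
  have hb0 : b 0 = 1 := by simp [hb]
  induction n with
  | zero => simp [hb0, hV0]
  | succ n ih =>
    have hstep : ∀ i ∈ range (n + 1),
        b (i + 1) * V (n + 1 - (i + 1)) = b i * V (n - i) - a i * V (n - i) := by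
      intro i _
      rw [hb, hb, sum_range_succ, Nat.add_sub_add_right]
      ring
    rw [sum_range_succ', sum_congr rfl hstep, sum_sub_distrib, ih, ← hV, hb0, Nat.sub_zero]
    ring

theorem hasSum_profile_of_renewal (ha0 : ∀ k, 0 ≤ a k) (ha : Summable a)
    (hV0 : ∀ n, 0 ≤ V n) (hV1 : ∀ n, V n ≤ 1)
    (hV : ∀ n, V (n + 1) = ∑ k ∈ range (n + 1), a k * V (n - k))
    {φ : ℕ → ℕ} (hφ : Tendsto φ atTop atTop)
    (hx : ∀ i, Tendsto (fun j => V (φ j - i)) atTop (𝓝 (x i))) (i : ℕ) :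
    HasSum (fun k => a k * x (i + 1 + k)) (x i) := by
  refine hasSum_of_tendsto_sum_range_of_dominated (N := fun j => φ j - i)
    (F := fun j k => a k * V (φ j - i - 1 - k)) ha ((tendsto_sub_atTop_nat i).comp hφ)
    (fun k => ?_) (fun j k => ?_) ?_
  · simpa only [Nat.sub_sub] using (hx (i + 1 + k)).const_mul (a k)
  · rw [abs_mul, abs_of_nonneg (ha0 k), abs_of_nonneg (hV0 _)]
    exact mul_le_of_le_one_right (ha0 k) (hV1 _)
  · refine (hx i).congr' ((hφ.eventually_gt_atTop i).mono fun j hj => ?_)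
    have := hV (φ j - i - 1)
    rwa [Nat.sub_add_cancel (by omega)] at this

theorem hasSum_profile_of_renewal_identity (hb0 : ∀ n, 0 ≤ b n) (hb : Summable b)
    (hV0 : ∀ n, 0 ≤ V n) (hV1 : ∀ n, V n ≤ 1)
    (hident : ∀ n, ∑ i ∈ range (n + 1), b i * V (n - i) = 1)
    {φ : ℕ → ℕ} (hφ : Tendsto φ atTop atTop)
    (hx : ∀ i, Tendsto (fun j => V (φ j - i)) atTop (𝓝 (x i))) (t : ℕ) :
    HasSum (fun i => b i * x (t + i)) 1 := by
  refine hasSum_of_tendsto_sum_range_of_dominated (N := fun j => φ j - t + 1)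
    (F := fun j i => b i * V (φ j - t - i)) hb
    ((tendsto_add_atTop_nat 1).comp ((tendsto_sub_atTop_nat t).comp hφ))
    (fun i => ?_) (fun j i => ?_) ?_
  · simpa only [Nat.sub_sub] using (hx (t + i)).const_mul (b i)
  · rw [abs_mul, abs_of_nonneg (hb0 i), abs_of_nonneg (hV0 _)]
    exact mul_le_of_le_one_right (hb0 i) (hV1 _)
  · simp only [hident, tendsto_const_nhds]

theorem exists_profile_of_tendsto_comp (hV0 : ∀ n, 0 ≤ V n) (hV1 : ∀ n, V n ≤ 1)
    {ψ : ℕ → ℕ} (hψ : Tendsto ψ atTop atTop) {L : ℝ} (hL : Tendsto (V ∘ ψ) atTop (𝓝 L)) :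
    ∃ φ : ℕ → ℕ, ∃ x : ℕ → ℝ, Tendsto φ atTop atTop ∧
      (∀ i, Tendsto (fun j => V (φ j - i)) atTop (𝓝 (x i))) ∧ x 0 = L := by
  obtain ⟨x, -, θ, hθ, hlim⟩ := (isCompact_univ_pi fun _ => isCompact_Icc).tendsto_subseq
    (x := fun j i => V (ψ j - i)) (s := univ.pi fun _ => Icc 0 1)
    fun j => mem_univ_pi.mpr fun i => ⟨hV0 _, hV1 _⟩
  have hx := tendsto_pi_nhds.mp hlim
  refine ⟨ψ ∘ θ, x, hψ.comp hθ.tendsto_atTop, hx, ?_⟩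
  exact tendsto_nhds_unique (hx 0) (hL.comp hθ.tendsto_atTop)

theorem eq_of_hasSum_mul_of_le {y : ℕ → ℝ} {L : ℝ} (ha0 : ∀ k, 0 ≤ a k) (ha : HasSum a 1)
    (hy : ∀ k, y k ≤ L) (h : HasSum (fun k => a k * y k) L) {k : ℕ} (hk : a k ≠ 0) :
    y k = L := by
  have hgap : HasSum (fun k => a k * (L - y k)) 0 := by
    simpa [mul_sub] using (ha.mul_right L).sub h
  have := congrFun ((hasSum_zero_iff_of_nonneg fun k =>
    mul_nonneg (ha0 k) (sub_nonneg.mpr (hy k))).mp hgap) k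
  simp only [Pi.zero_apply, mul_eq_zero, hk, false_or, sub_eq_zero] at this
  exact this.symm

theorem eq_apply_zero_of_mem_closure (ha0 : ∀ k, 0 ≤ a k) (ha : HasSum a 1)
    (hx : ∀ i, x i ≤ x 0) (hrec : ∀ i, HasSum (fun k => a k * x (i + 1 + k)) (x i))
    {t : ℕ} (ht : t ∈ AddSubmonoid.closure {n | 1 ≤ n ∧ a (n - 1) ≠ 0}) : x t = x 0 := by
  induction ht using AddSubmonoid.closure_induction_right with
  | zero => rfl
  | add_right t _ s hs ih =>
    obtain ⟨hs1, hs2⟩ := hs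
    obtain ⟨k, rfl⟩ : ∃ k, s = k + 1 := ⟨s - 1, by omega⟩
    rw [show t + (k + 1) = t + 1 + k by ring]
    exact eq_of_hasSum_mul_of_le (y := fun k => x (t + 1 + k)) ha0 ha (fun _ => hx _)
      (ih ▸ hrec t) (by simpa using hs2)

theorem mul_eq_one_of_extremal_profile {c : ℝ} (ha0 : ∀ k, 0 ≤ a k) (ha : HasSum a 1)
    (hb : ∀ n, b n = 1 - ∑ k ∈ range n, a k) (hbc : HasSum b c)
    (hV0 : V 0 = 1) (hVnn : ∀ n, 0 ≤ V n) (hV1 : ∀ n, V n ≤ 1)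
    (hV : ∀ n, V (n + 1) = ∑ k ∈ range (n + 1), a k * V (n - k))
    (hgcd : ∀ d : ℕ, (∀ n : ℕ, 1 ≤ n → a (n - 1) ≠ 0 → d ∣ n) → d = 1)
    {φ : ℕ → ℕ} (hφ : Tendsto φ atTop atTop)
    (hx : ∀ i, Tendsto (fun j => V (φ j - i)) atTop (𝓝 (x i)))
    (hext : (∀ i, x i ≤ x 0) ∨ ∀ i, x 0 ≤ x i) : c * x 0 = 1 := by
  set S : Set ℕ := {n | 1 ≤ n ∧ a (n - 1) ≠ 0}
  have hS : Nat.setGcd S = 1 := hgcd _ fun n h1 h2 => Nat.setGcd_dvd_of_mem ⟨h1, h2⟩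
  obtain ⟨N₀, hN₀⟩ := Nat.exists_mem_closure_of_ge S
  have hb0 : ∀ n, 0 ≤ b n := fun n => by
    rw [hb]; linarith [sum_le_hasSum (range n) (fun k _ => ha0 k) ha]
  have hrec := hasSum_profile_of_renewal ha0 ha.summable hVnn hV1 hV hφ hx
  have hconst : ∀ i, x (N₀ + i) = x 0 := fun i => by
    have hmem := hN₀ (N₀ + i) (by omega) (hS ▸ one_dvd _)
    rcases hext with hle | hge
    · exact eq_apply_zero_of_mem_closure ha0 ha hle hrec hmem
    · simpa using eq_apply_zero_of_mem_closure (x := -x) ha0 ha (by simpa using hge)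
        (fun i => by simpa using (hrec i).neg) hmem
  have hid := hasSum_profile_of_renewal_identity hb0 hbc.summable hVnn hV1
    (renewal_identity hb hV0 hV) hφ hx N₀
  simp only [hconst] at hid
  exact (hbc.mul_right (x 0)).unique hid

/-- **Erdős–Feller–Pollard renewal theorem.** -/
theorem tendsto_renewal {c : ℝ} (ha0 : ∀ k, 0 ≤ a k) (ha : HasSum a 1)
    (hb : ∀ n, b n = 1 - ∑ k ∈ range n, a k) (hbc : HasSum b c)
    (hV0 : V 0 = 1) (hVnn : ∀ n, 0 ≤ V n) (hV1 : ∀ n, V n ≤ 1)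
    (hV : ∀ n, V (n + 1) = ∑ k ∈ range (n + 1), a k * V (n - k))
    (hgcd : ∀ d : ℕ, (∀ n : ℕ, 1 ≤ n → a (n - 1) ≠ 0 → d ∣ n) → d = 1) :
    Tendsto V atTop (𝓝 c⁻¹) := by
  have hextremal : ∀ L, MapClusterPt L atTop V →
      ((∀ y, MapClusterPt y atTop V → y ≤ L) ∨ ∀ y, MapClusterPt y atTop V → L ≤ y) →
      L = c⁻¹ := by
    intro L hL hext
    obtain ⟨ψ, hψ, hVψ⟩ := hL.tendsto_subseq
    obtain ⟨φ, x, hφ, hx, rfl⟩ := exists_profile_of_tendsto_comp hVnn hV1 hψ.tendsto_atTop hVψ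
    have hcluster : ∀ i, MapClusterPt (x i) atTop V := fun i =>
      (hx i).mapClusterPt.of_comp ((tendsto_sub_atTop_nat i).comp hφ)
    refine eq_inv_of_mul_eq_one_right (mul_eq_one_of_extremal_profile ha0 ha hb hbc hV0 hVnn hV1
      hV hgcd hφ hx ?_)
    exact hext.imp (fun h i => h _ (hcluster i)) (fun h i => h _ (hcluster i))
  have hbdd : IsBoundedUnder (· ≤ ·) atTop V := isBoundedUnder_of ⟨1, hV1⟩
  have hbdd' : IsBoundedUnder (· ≥ ·) atTop V := isBoundedUnder_of ⟨0, hVnn⟩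
  refine tendsto_of_liminf_eq_limsup ?_ ?_ hbdd hbdd'
  · exact hextremal _ (.liminf hbdd.isCoboundedUnder_ge hbdd') (.inr fun y hy => hy.liminf_le hbdd')
  · exact hextremal _ (.limsup hbdd'.isCoboundedUnder_le hbdd) (.inl fun y hy => hy.le_limsup hbdd)

end Renewal

open scoped ENNReal

section KilledChain

variable {M : Type*} [MeasurableSpace M] (K : Kernel M M) (P : Set M) (ρ ξ : Measure M)

theorem MeasureTheory.Measure.comp_finsetSum {ι : Type*} (s : Finset ι) (μ : ι → Measure M) :
    K ∘ₘ (∑ i ∈ s, μ i) = ∑ i ∈ s, K ∘ₘ μ i := by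
  induction s using Finset.cons_induction with
  | empty => simp
  | cons i s hi ih => simp [sum_cons, ih]

instance isProbabilityMeasure_iterateK [IsMarkovKernel K] [IsProbabilityMeasure ξ] (n : ℕ) :
    IsProbabilityMeasure (iterateK K ξ n) := by
  induction n with
  | zero => assumption
  | succ n ih => exact ⟨by simp [iterateK]⟩

theorem comp_killedSeq (hP : MeasurableSet P) (hrestart : ∀ x ∈ P, K x = ρ) (n : ℕ) :
    K ∘ₘ killedSeq K P ξ n = killedSeq K P ξ (n + 1) + killedSeq K P ξ n P • ρ := by
  have hrestrict : K ∘ₘ (killedSeq K P ξ n).restrict P = killedSeq K P ξ n P • ρ := by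
    rw [Measure.comp_congr (η := Kernel.const M ρ) (ae_restrict_of_forall_mem hP hrestart),
      Measure.const_comp, Measure.restrict_apply_univ]
  conv_lhs => rw [← Measure.restrict_add_restrict_compl (μ := killedSeq K P ξ n) hP]
  rw [Measure.comp_add, hrestrict, add_comm]
  rfl

theorem iterateK_eq_killedSeq_add_sum (hP : MeasurableSet P) (hrestart : ∀ x ∈ P, K x = ρ)
    (n : ℕ) : iterateK K ξ n = killedSeq K P ξ n
      + ∑ k ∈ range n, killedSeq K P ξ k P • iterateK K ρ (n - 1 - k) := by
  induction n with
  | zero => simp [iterateK, killedSeq]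
  | succ n ih =>
    have hshift : ∀ k ∈ range n, K ∘ₘ (killedSeq K P ξ k P • iterateK K ρ (n - 1 - k))
        = killedSeq K P ξ k P • iterateK K ρ (n + 1 - 1 - k) := fun k hk => by
      rw [Measure.comp_smul, show n + 1 - 1 - k = n - 1 - k + 1 by grind]
      rfl
    change K ∘ₘ iterateK K ξ n = _
    rw [ih, Measure.comp_add, Measure.comp_finsetSum, sum_congr rfl hshift,
      comp_killedSeq K P ρ ξ hP hrestart, sum_range_succ, show n + 1 - 1 - n = 0 by omega]
    change _ = _ + (_ + _ • ρ)
    abel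

-- `renewalSeq K P ρ j` is the probability that the chain started from `ρ` restarts at time `j`.
noncomputable def renewalSeq : ℕ → ℝ≥0∞
  | 0 => 1
  | m + 1 => iterateK K ρ m P

theorem iterateK_eq_sum_renewalSeq (hP : MeasurableSet P) (hrestart : ∀ x ∈ P, K x = ρ)
    (m : ℕ) : iterateK K ρ m
      = ∑ j ∈ range (m + 1), renewalSeq K P ρ j • killedSeq K P ρ (m - j) := by
  induction m with
  | zero => simp [iterateK, killedSeq, renewalSeq]
  | succ m ih =>
    have hrenewal : renewalSeq K P ρ (m + 1)
        = ∑ j ∈ range (m + 1), renewalSeq K P ρ j * killedSeq K P ρ (m - j) P := by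
      change iterateK K ρ m P = _
      simp [ih]
    have hstep : ∀ j ∈ range (m + 1), K ∘ₘ (renewalSeq K P ρ j • killedSeq K P ρ (m - j))
        = renewalSeq K P ρ j • killedSeq K P ρ (m + 1 - j)
          + (renewalSeq K P ρ j * killedSeq K P ρ (m - j) P) • ρ := fun j hj => by
      rw [Measure.comp_smul, comp_killedSeq K P ρ ρ hP hrestart, smul_add, mul_smul,
        show m - j + 1 = m + 1 - j by grind]
    change K ∘ₘ iterateK K ρ m = _
    rw [ih, Measure.comp_finsetSum, sum_congr rfl hstep, sum_add_distrib, ← sum_smul,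
      ← hrenewal, sum_range_succ _ (m + 1), Nat.sub_self]
    rfl

theorem renewalSeq_succ (hP : MeasurableSet P) (hrestart : ∀ x ∈ P, K x = ρ) (n : ℕ) :
    renewalSeq K P ρ (n + 1)
      = ∑ k ∈ range (n + 1), killedSeq K P ρ k P * renewalSeq K P ρ (n - k) := by
  change iterateK K ρ n P = _
  rw [iterateK_eq_sum_renewalSeq K P ρ hP hrestart, ← sum_range_reflect]
  simp only [Measure.coe_finsetSum, Measure.coe_smul, Finset.sum_apply, Pi.smul_apply,
    smul_eq_mul]
  refine sum_congr rfl fun k hk => ?_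
  rw [mul_comm, show n - (n + 1 - 1 - k) = k by grind, show n + 1 - 1 - k = n - k by omega]

theorem killedSeq_univ_succ [IsMarkovKernel K] (n : ℕ) :
    killedSeq K P ξ (n + 1) univ = killedSeq K P ξ n Pᶜ := by
  simp [killedSeq]

theorem killedSeq_apply_le_one [IsMarkovKernel K] [IsProbabilityMeasure ξ] (n : ℕ) (C : Set M) :
    killedSeq K P ξ n C ≤ 1 := by
  refine (measure_mono (Set.subset_univ C)).trans ?_
  induction n with
  | zero => exact prob_le_one (μ := ξ)
  | succ n ih =>
    exact (killedSeq_univ_succ K P ξ n).trans_le ((measure_mono (Set.subset_univ _)).trans ih)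

theorem killedSeq_apply_ne_top [IsMarkovKernel K] [IsProbabilityMeasure ξ] (n : ℕ) (C : Set M) :
    killedSeq K P ξ n C ≠ ⊤ :=
  ne_top_of_le_ne_top ENNReal.one_ne_top (killedSeq_apply_le_one K P ξ n C)

theorem toReal_killedSeq_univ [IsMarkovKernel K] [IsProbabilityMeasure ξ]
    (hP : MeasurableSet P) (n : ℕ) : (killedSeq K P ξ n univ).toReal
      = 1 - ∑ k ∈ range n, (killedSeq K P ξ k P).toReal := by
  induction n with
  | zero => simp [killedSeq]
  | succ n ih =>
    have hsplit := congrArg ENNReal.toReal (measure_add_measure_compl (μ := killedSeq K P ξ n) hP)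
    rw [ENNReal.toReal_add (killedSeq_apply_ne_top K P ξ n _) (killedSeq_apply_ne_top K P ξ n _)]
      at hsplit
    rw [killedSeq_univ_succ, sum_range_succ]
    linarith

theorem hasSum_toReal_killedSeq_univ [IsMarkovKernel K] [IsProbabilityMeasure ξ]
    (hσ : Measure.sum (killedSeq K P ξ) univ ≠ ⊤) :
    HasSum (fun n => (killedSeq K P ξ n univ).toReal)
      (Measure.sum (killedSeq K P ξ) univ).toReal := by
  rw [Measure.sum_apply _ .univ] at hσ ⊢
  rw [ENNReal.tsum_toReal_eq fun n => killedSeq_apply_ne_top K P ξ n _]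
  exact ENNReal.hasSum_toReal hσ

theorem hasSum_toReal_killedSeq_apply [IsMarkovKernel K] [IsProbabilityMeasure ξ]
    (hP : MeasurableSet P) (hσ : Measure.sum (killedSeq K P ξ) univ ≠ ⊤) :
    HasSum (fun n => (killedSeq K P ξ n P).toReal) 1 := by
  rw [hasSum_iff_tendsto_nat_of_nonneg fun n => ENNReal.toReal_nonneg]
  have h := (hasSum_toReal_killedSeq_univ K P ξ hσ).summable.tendsto_atTop_zero.const_sub 1
  simp only [toReal_killedSeq_univ K P ξ hP, sub_sub_cancel, sub_zero] at h
  exact h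

end KilledChain

section TotalVariation

variable {M : Type*} [MeasurableSpace M]

theorem abs_sub_le_tvDist (μ ν : Measure M) [IsFiniteMeasure μ] [IsFiniteMeasure ν] {C : Set M}
    (hC : MeasurableSet C) : |(μ C).toReal - (ν C).toReal| ≤ tvDist μ ν := by
  refine le_ciSup (f := fun C : {C : Set M // MeasurableSet C} => |(μ C).toReal - (ν C).toReal|)
    ⟨(μ univ).toReal + (ν univ).toReal, ?_⟩ ⟨C, hC⟩
  rintro _ ⟨D, rfl⟩
  refine (abs_sub _ _).trans (add_le_add ?_ ?_) <;>
    simpa using measure_mono (Set.subset_univ _)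

theorem tendsto_tvDist_of_le {μs : ℕ → Measure M} {ν : Measure M} {E : ℕ → ℝ}
    (hE : Tendsto E atTop (𝓝 0))
    (h : ∀ n C, MeasurableSet C → |(μs n C).toReal - (ν C).toReal| ≤ E n) :
    Tendsto (fun n => tvDist (μs n) ν) atTop (𝓝 0) :=
  squeeze_zero (fun _ => Real.iSup_nonneg fun _ => abs_nonneg _)
    (fun n => ciSup_le fun C => h n C.1 C.2) hE

theorem iterateK_eq_self {K : Kernel M M} {μ : Measure M} (hinv : K ∘ₘ μ = μ) (n : ℕ) :
    iterateK K μ n = μ := by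
  induction n with
  | zero => rfl
  | succ n ih => exact (congrArg (K ∘ₘ ·) ih).trans hinv

theorem eq_of_comp_eq_of_tendsto_tvDist {K : Kernel M M} {μ μ' : Measure M}
    [IsProbabilityMeasure μ] [IsProbabilityMeasure μ'] (hinv : K ∘ₘ μ' = μ')
    (h : Tendsto (fun n => tvDist (iterateK K μ' n) μ) atTop (𝓝 0)) : μ' = μ := by
  simp only [iterateK_eq_self hinv, tendsto_const_nhds_iff] at h
  ext C hC
  have hle := abs_sub_le_tvDist μ' μ hC
  rw [h, abs_nonpos_iff, sub_eq_zero] at hle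
  exact (ENNReal.toReal_eq_toReal_iff' (measure_ne_top _ _) (measure_ne_top _ _)).mp hle

end TotalVariation

section Stationarity

variable {M : Type*} [MeasurableSpace M] (K : Kernel M M) (P : Set M) (ρ : Measure M)
  [IsProbabilityMeasure ρ]

noncomputable def stationaryMeasure : Measure M :=
  (Measure.sum (killedSeq K P ρ) univ)⁻¹ • Measure.sum (killedSeq K P ρ)

theorem isProbabilityMeasure_stationaryMeasure (hσ : Measure.sum (killedSeq K P ρ) univ ≠ ⊤) :
    IsProbabilityMeasure (stationaryMeasure K P ρ) := by
  have hone : 1 ≤ Measure.sum (killedSeq K P ρ) univ := by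
    rw [Measure.sum_apply _ .univ]
    exact (by simp [killedSeq] : (1 : ℝ≥0∞) = killedSeq K P ρ 0 univ).trans_le (ENNReal.le_tsum 0)
  exact ⟨by rw [stationaryMeasure, Measure.smul_apply, smul_eq_mul,
    ENNReal.inv_mul_cancel (one_pos.trans_le hone).ne' hσ]⟩

variable [IsMarkovKernel K]

theorem renewalSeq_le_one (n : ℕ) : renewalSeq K P ρ n ≤ 1 := by
  cases n with
  | zero => exact le_rfl
  | succ n => exact prob_le_one

theorem tendsto_toReal_renewalSeq (hP : MeasurableSet P) (hrestart : ∀ x ∈ P, K x = ρ)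
    (hσ : Measure.sum (killedSeq K P ρ) univ ≠ ⊤)
    (hap : ∀ d : ℕ, (∀ n : ℕ, 1 ≤ n → killedSeq K P ρ (n - 1) P ≠ 0 → d ∣ n) → d = 1) :
    Tendsto (fun n => (renewalSeq K P ρ n).toReal) atTop
      (𝓝 (Measure.sum (killedSeq K P ρ) univ).toReal⁻¹) := by
  refine tendsto_renewal (fun _ => ENNReal.toReal_nonneg)
    (hasSum_toReal_killedSeq_apply K P ρ hP hσ)
    (toReal_killedSeq_univ K P ρ hP) (hasSum_toReal_killedSeq_univ K P ρ hσ)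
    (by simp [renewalSeq]) (fun _ => ENNReal.toReal_nonneg)
    (fun n => ENNReal.toReal_le_of_le_ofReal zero_le_one (by simpa using renewalSeq_le_one K P ρ n))
    (fun n => ?_) fun d hd => hap d fun n h1 h2 => hd n h1 (ENNReal.toReal_ne_zero.mpr
      ⟨h2, killedSeq_apply_ne_top K P ρ _ _⟩)
  rw [renewalSeq_succ K P ρ hP hrestart, ENNReal.toReal_sum fun k _ => ENNReal.mul_ne_top
    (killedSeq_apply_ne_top K P ρ _ _) (ne_top_of_le_ne_top ENNReal.one_ne_top
      (renewalSeq_le_one K P ρ _))]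
  simp only [ENNReal.toReal_mul]

theorem toReal_iterateK_self_apply (hP : MeasurableSet P) (hrestart : ∀ x ∈ P, K x = ρ)
    (m : ℕ) (C : Set M) : (iterateK K ρ m C).toReal = ∑ i ∈ range (m + 1),
      (renewalSeq K P ρ (m - i)).toReal * (killedSeq K P ρ i C).toReal := by
  rw [iterateK_eq_sum_renewalSeq K P ρ hP hrestart, ← sum_range_reflect]
  simp only [Measure.coe_finsetSum, Measure.coe_smul, Finset.sum_apply, Pi.smul_apply,
    smul_eq_mul]
  rw [ENNReal.toReal_sum fun j _ => ENNReal.mul_ne_top (ne_top_of_le_ne_top ENNReal.one_ne_top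
    (renewalSeq_le_one K P ρ _)) (killedSeq_apply_ne_top K P ρ _ _)]
  refine sum_congr rfl fun i hi => ?_
  rw [ENNReal.toReal_mul, show m + 1 - 1 - i = m - i by omega, show m - (m - i) = i by grind]

theorem toReal_iterateK_succ_apply (hP : MeasurableSet P) (hrestart : ∀ x ∈ P, K x = ρ)
    (ξ : Measure M) [IsProbabilityMeasure ξ] (m : ℕ) (C : Set M) :
    (iterateK K ξ (m + 1) C).toReal = (killedSeq K P ξ (m + 1) C).toReal
      + ∑ k ∈ range (m + 1), (iterateK K ρ (m - k) C).toReal * (killedSeq K P ξ k P).toReal := by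
  rw [iterateK_eq_killedSeq_add_sum K P ρ ξ hP hrestart]
  simp only [Measure.coe_add, Measure.coe_finsetSum, Pi.add_apply, Finset.sum_apply,
    Measure.coe_smul, Pi.smul_apply, smul_eq_mul, add_tsub_cancel_right]
  have hterm : ∀ k ∈ range (m + 1), killedSeq K P ξ k P * iterateK K ρ (m - k) C ≠ ⊤ :=
    fun k _ => ENNReal.mul_ne_top (killedSeq_apply_ne_top K P ξ _ _) (measure_ne_top _ _)
  rw [ENNReal.toReal_add (killedSeq_apply_ne_top K P ξ _ _) (ENNReal.sum_ne_top.mpr hterm),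
    ENNReal.toReal_sum hterm]
  simp only [ENNReal.toReal_mul, mul_comm]

theorem abs_toReal_iterateK_self_sub_le (hP : MeasurableSet P) (hrestart : ∀ x ∈ P, K x = ρ)
    (hσ : Measure.sum (killedSeq K P ρ) univ ≠ ⊤) (m : ℕ) {C : Set M} (hC : MeasurableSet C) :
    |(iterateK K ρ m C).toReal - (stationaryMeasure K P ρ C).toReal|
      ≤ convRemainder
          (fun n => |(renewalSeq K P ρ n).toReal - (Measure.sum (killedSeq K P ρ) univ).toReal⁻¹|)
          (fun n => (killedSeq K P ρ n univ).toReal)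
          (Measure.sum (killedSeq K P ρ) univ).toReal⁻¹ m := by
  have hstat : (stationaryMeasure K P ρ C).toReal = (Measure.sum (killedSeq K P ρ) univ).toReal⁻¹
      * ∑' i, (killedSeq K P ρ i C).toReal := by
    rw [stationaryMeasure, Measure.smul_apply, smul_eq_mul, ENNReal.toReal_mul,
      ENNReal.toReal_inv, Measure.sum_apply _ hC,
      ENNReal.tsum_toReal_eq fun i => killedSeq_apply_ne_top K P ρ i C]
  rw [toReal_iterateK_self_apply K P ρ hP hrestart, hstat]
  exact abs_sum_range_mul_sub_le_convRemainder (y := fun n => (renewalSeq K P ρ n).toReal)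
    (fun _ => ENNReal.toReal_nonneg)
    (fun i => ENNReal.toReal_mono (killedSeq_apply_ne_top K P ρ i _)
      (measure_mono (Set.subset_univ C)))
    (hasSum_toReal_killedSeq_univ K P ρ hσ).summable (fun _ => le_rfl)
    (abs_of_nonneg (inv_nonneg.mpr ENNReal.toReal_nonneg)).le m

theorem tendsto_tvDist_iterateK_self (hP : MeasurableSet P) (hrestart : ∀ x ∈ P, K x = ρ)
    (hσ : Measure.sum (killedSeq K P ρ) univ ≠ ⊤)
    (hap : ∀ d : ℕ, (∀ n : ℕ, 1 ≤ n → killedSeq K P ρ (n - 1) P ≠ 0 → d ∣ n) → d = 1) :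
    Tendsto (fun m => tvDist (iterateK K ρ m) (stationaryMeasure K P ρ)) atTop (𝓝 0) := by
  refine tendsto_tvDist_of_le (tendsto_convRemainder _ ?_ (fun _ => ENNReal.toReal_nonneg)
    (hasSum_toReal_killedSeq_univ K P ρ hσ).summable)
    fun m C hC => abs_toReal_iterateK_self_sub_le K P ρ hP hrestart hσ m hC
  simpa using ((tendsto_toReal_renewalSeq K P ρ hP hrestart hσ hap).sub_const
    (Measure.sum (killedSeq K P ρ) univ).toReal⁻¹).abs

theorem tendsto_tvDist_iterateK (hP : MeasurableSet P) (hrestart : ∀ x ∈ P, K x = ρ)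
    {μ : Measure M} [IsProbabilityMeasure μ]
    (hρ : Tendsto (fun m => tvDist (iterateK K ρ m) μ) atTop (𝓝 0))
    (ξ : Measure M) [IsProbabilityMeasure ξ] (hσ : Measure.sum (killedSeq K P ξ) univ ≠ ⊤) :
    Tendsto (fun n => tvDist (iterateK K ξ n) μ) atTop (𝓝 0) := by
  have hb := (hasSum_toReal_killedSeq_univ K P ξ hσ).summable
  have ha := hasSum_toReal_killedSeq_apply K P ξ hP hσ
  rw [← tendsto_add_atTop_iff_nat 1]
  refine tendsto_tvDist_of_le (E := fun m => (killedSeq K P ξ (m + 1) univ).toReal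
    + convRemainder (fun m => tvDist (iterateK K ρ m) μ) (fun k => (killedSeq K P ξ k P).toReal)
      1 m)
    ?_ fun m C hC => ?_
  · simpa using (hb.tendsto_atTop_zero.comp (tendsto_add_atTop_nat 1)).add
      (tendsto_convRemainder 1 hρ (fun _ => ENNReal.toReal_nonneg) ha.summable)
  have hconv := abs_sum_range_mul_sub_le_convRemainder
    (y := fun m => (iterateK K ρ m C).toReal) (ℓ := (μ C).toReal) (r := 1)
    (fun _ => ENNReal.toReal_nonneg) (fun _ => le_rfl) ha.summable (fun m => abs_sub_le_tvDist _ _ hC)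
    (by rw [abs_of_nonneg ENNReal.toReal_nonneg]; exact measureReal_le_one) m
  rw [ha.tsum_eq, mul_one] at hconv
  have hkilled : |(killedSeq K P ξ (m + 1) C).toReal| ≤ (killedSeq K P ξ (m + 1) univ).toReal := by
    rw [abs_of_nonneg ENNReal.toReal_nonneg]
    exact ENNReal.toReal_mono (killedSeq_apply_ne_top K P ξ _ _) (measure_mono (Set.subset_univ C))
  rw [toReal_iterateK_succ_apply K P ρ hP hrestart, add_sub_assoc]
  exact (abs_add_le _ _).trans (add_le_add hkilled hconv)

end Stationarity

theorem convergence_to_stationarity_general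
    {M : Type*} [MeasurableSpace M]
    (K : Kernel M M) [IsMarkovKernel K]
    (P : Set M) (hP : MeasurableSet P)
    (ρ : Measure M) [IsProbabilityMeasure ρ]
    (hrestart : ∀ x ∈ P, K x = ρ)
    (hσ : ∀ ξ : Measure M, IsProbabilityMeasure ξ →
      Measure.sum (killedSeq K P ξ) Set.univ ≠ ⊤)
    -- aperiodicity: gcd {n ≥ 1 : P^ρ(σ_P = n−1) > 0} = 1
    (hap : ∀ d : ℕ, (∀ n : ℕ, 1 ≤ n → killedSeq K P ρ (n - 1) P ≠ 0 → d ∣ n) → d = 1) :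
    (∀ ξ : Measure M, IsProbabilityMeasure ξ →
      Tendsto (fun n => tvDist (iterateK K ξ n)
        (((Measure.sum (killedSeq K P ρ)) Set.univ)⁻¹ • Measure.sum (killedSeq K P ρ)))
        atTop (nhds 0)) ∧
    (∀ μ' : Measure M, IsProbabilityMeasure μ' → μ'.bind K = μ' →
      μ' = ((Measure.sum (killedSeq K P ρ)) Set.univ)⁻¹ • Measure.sum (killedSeq K P ρ)) := by
  have := isProbabilityMeasure_stationaryMeasure K P ρ (hσ ρ ‹_›)
  have hconv : ∀ ξ : Measure M, IsProbabilityMeasure ξ →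
      Tendsto (fun n => tvDist (iterateK K ξ n) (stationaryMeasure K P ρ)) atTop (𝓝 0) :=
    fun ξ _ => tendsto_tvDist_iterateK K P ρ hP hrestart
      (tendsto_tvDist_iterateK_self K P ρ hP hrestart (hσ ρ ‹_›) hap) ξ (hσ ξ ‹_›)
  exact ⟨hconv, fun μ' _ hinv =>
    eq_of_comp_eq_of_tendsto_tvDist (μ := stationaryMeasure K P ρ) hinv (hconv μ' ‹_›)⟩

/-- **Convergence to the stationary flux.**  For the source-sink jump chain (restart at
`ρ` upon hitting `P`) with `E^ξ[σ_P] < ∞` for every initial distribution `ξ`, if the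
aperiodicity condition `gcd{n ≥ 1 : P^ρ(σ_P = n−1) > 0} = 1` holds, then
`‖ξK^n − μ‖_TV → 0` for every probability measure `ξ`, where `μ = ν/ν(M)` is the
invariant measure; in particular `μ` is the unique invariant probability measure. -/
theorem convergence_to_stationarity
    {M : Type*} [MeasurableSpace M] [StandardBorelSpace M]
    (K : Kernel M M) [IsMarkovKernel K]
    (P : Set M) (hP : MeasurableSet P)
    (ρ : Measure M) [IsProbabilityMeasure ρ] (hρP : ρ P = 0)
    (hrestart : ∀ x ∈ P, K x = ρ)
    (hσ : ∀ ξ : Measure M, IsProbabilityMeasure ξ →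
      Measure.sum (killedSeq K P ξ) Set.univ ≠ ⊤)
    -- aperiodicity: gcd {n ≥ 1 : P^ρ(σ_P = n−1) > 0} = 1
    (hap : ∀ d : ℕ, (∀ n : ℕ, 1 ≤ n → killedSeq K P ρ (n - 1) P ≠ 0 → d ∣ n) → d = 1) :
    (∀ ξ : Measure M, IsProbabilityMeasure ξ →
      Tendsto (fun n => tvDist (iterateK K ξ n)
        (((Measure.sum (killedSeq K P ρ)) Set.univ)⁻¹ • Measure.sum (killedSeq K P ρ)))
        atTop (nhds 0)) ∧
    (∀ μ' : Measure M, IsProbabilityMeasure μ' → μ'.bind K = μ' →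
      μ' = ((Measure.sum (killedSeq K P ρ)) Set.univ)⁻¹ • Measure.sum (killedSeq K P ρ)) :=
  convergence_to_stationarity_general K P hP ρ hrestart hσ hap
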